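/- In the M-type M_∞ over the universe, the element q(∗) obtained by corecursion from the coalgebra m : 1 → Σ (A : U), (A → 1), m ∗ := (1, λ _. ∗), is a Quine atom: for all z : M_∞, (z ∈ q(∗)) ≃ (z = q(∗)), i.e. q(∗) = {q(∗)}. -/
import Mathlib


/- The element of M∞ obtained by corecursion from the one-point coalgebra
   m ∗ := (1, λ _. ∗) is a Quine atom: (z ∈ q ∗) ≃ (z = q ∗). -/

universe u

/-- The small image of a map from a small type: `Shrink` of its range. -/
noncomputable def img {A : Type u} {X : Type (u + 1)} (f : A → X) : Type u :=
  Shrink.{u} (Set.range f)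

/-- The inclusion of the image into the codomain. -/
noncomputable def incl {A : Type u} {X : Type (u + 1)} (f : A → X) :
    img f → X :=
  fun a => ((equivShrink (Set.range f)).symm a).1

theorem incl_injective {A : Type u} {X : Type (u + 1)} (f : A → X) :
    Function.Injective (incl f) :=
  Subtype.val_injective.comp (equivShrink (Set.range f)).symm.injective

section MType

variable (M : Type (u + 1)) (desup : M ≃ Σ A : Type u, (A → M))
  (corec : ∀ X : Type (u + 1), (X → Σ A : Type u, (A → X)) → X → M)

/-- The corecursively-defined map taking images of branching functions. -/
noncomputable def sigM : M → M :=
  corec M (fun x => ⟨img (desup x).2, incl (desup x).2⟩)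

/-- Membership on the M-type `M∞`: `x ∈ y` is the fiber of the branching
function of `y` over `x`. -/
def memM (x y : M) : Type u :=
  {a : (desup y).1 // (desup y).2 a = x}

/-- The coiterative sets: the image of `σ`. -/
def V0 : Type (u + 1) :=
  {x : M // ∃ b : M, sigM M desup corec b = x}

/-- Membership on coiterative sets (a mere proposition). -/
def memV0 (z x : V0 M desup corec) : Prop :=
  ∃ a : (desup x.1).1, (desup x.1).2 a = z.1

/-- The U-powerset. -/
def PU (X : Type (u + 1)) : Type (u + 1) :=
  Σ A : Type u, {f : A → X // Function.Injective f}

/-- The action of the U-powerset on maps, by image factorisation. -/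
noncomputable def PUmap {X Y : Type (u + 1)} (f : X → Y) : PU X → PU Y :=
  fun p => ⟨img (f ∘ p.2.1), incl (f ∘ p.2.1), incl_injective _⟩

end MType

/-- The Quine atom, obtained corecursively from the one-point coalgebra. -/
noncomputable def qAtom (M : Type (u + 1))
    (corec : ∀ X : Type (u + 1), (X → Σ A : Type u, (A → X)) → X → M) : M :=
  corec PUnit.{u + 2} (fun _ => ⟨PUnit.{u + 1}, fun _ => PUnit.unit⟩) PUnit.unit

theorem quine_atom (M : Type (u + 1))
    (desup : M ≃ Σ A : Type u, (A → M))
    (corec : ∀ X : Type (u + 1), (X → Σ A : Type u, (A → X)) → X → M)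
    (corec_spec : ∀ (X : Type (u + 1)) (m : X → Σ A : Type u, (A → X)) (x : X),
      desup (corec X m x) = ⟨(m x).1, fun a => corec X m ((m x).2 a)⟩)
    (corec_unique : ∀ (X : Type (u + 1)) (m : X → Σ A : Type u, (A → X)) (f : X → M),
      (∀ x : X, desup (f x) = ⟨(m x).1, fun a => f ((m x).2 a)⟩) → f = corec X m)
    (z : M) :
    Nonempty (memM M desup z (qAtom M corec) ≃ (z = qAtom M corec)) := by
  have h : desup (qAtom M corec) = ⟨PUnit, fun _ => qAtom M corec⟩ :=
    corec_spec _ _ _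
  constructor
  unfold memM
  rw [h]
  exact
    { toFun := fun s => s.2.symm
      invFun := fun e => ⟨PUnit.unit, e.symm⟩
      left_inv := fun s => by cases s; rfl
      right_inv := fun e => rfl }
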